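/- For the 2×2-block antisymmetric matrix built from a kernel K: {1,…,T}² → ℝ^{2×2} satisfying K(t,t') = −K(t',t)ᵀ, one has Pf(J + K) = 1 + Σ_{S=1}^T Σ_{𝔱 ∈ I_S^T} Pf(K_𝔱), where J is the 2T×2T block-diagonal matrix with blocks [[0,1],[−1,0]], I_S^T is the set of strictly increasing maps {1,…,S} → {1,…,T}, and K_𝔱 is the 2S×2S antisymmetric matrix with blocks K(𝔱(s),𝔱(s')). -/

import Mathlib

open Matrix BigOperators

/-- The Pfaffian of a `2n × 2n` matrix over `ℝ`, defined by the standard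
sum over all permutations with a `1/(2^n n!)` normalization. -/
noncomputable def Pf {n : ℕ} (A : Matrix (Fin (2 * n)) (Fin (2 * n)) ℝ) : ℝ :=
  (1 / (2 ^ n * (n.factorial : ℝ))) *
    ∑ σ : Equiv.Perm (Fin (2 * n)),
      ((Equiv.Perm.sign σ : ℤ) : ℝ) *
        ∏ i : Fin n,
          A (σ ⟨2 * i.val, by have := i.isLt; omega⟩)
            (σ ⟨2 * i.val + 1, by have := i.isLt; omega⟩)

/-- The `2T × 2T` matrix built from a `2 × 2`-matrix-valued kernel
`K : {1,…,T}² → ℝ^{2×2}`, with `(t,t')` block `K t t'`. -/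
def blockMat {T : ℕ} (K : Fin T → Fin T → Matrix (Fin 2) (Fin 2) ℝ) :
    Matrix (Fin (2 * T)) (Fin (2 * T)) ℝ :=
  fun i j =>
    K ⟨i.val / 2, by have := i.isLt; omega⟩ ⟨j.val / 2, by have := j.isLt; omega⟩
      ⟨i.val % 2, by omega⟩ ⟨j.val % 2, by omega⟩

/-- The `2T × 2T` block-diagonal matrix `J` with diagonal blocks `[[0,1],[−1,0]]`. -/
def Jmat (T : ℕ) : Matrix (Fin (2 * T)) (Fin (2 * T)) ℝ :=
  blockMat (fun t t' => if t = t' then !![0, 1; -1, 0] else 0)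

/-!
Index rows and columns by `blocks × Fin 2`, so that `2^T T! · Pf` becomes the signed sum `pfSum`
over permutations `σ` of `∏ₜ M (σ (t, 0)) (σ (t, 1))`. Expanding the product for `M = J + K`
chooses a set `U` of blocks carrying `J`-entries. Such an entry vanishes unless `σ` maps the block
onto a block, so the `U`-blocks land on a set `W` of blocks with `|W| = |U|`. Writing
`σ = (g × id) τ` with `g '' U = W` keeps the sign, since `g × id` is `g` applied twice, and `τ` then
preserves the `U`-blocks: there it permutes blocks and permutes entries within each block, every
one of these `2^|U| |U|!` choices contributing `sign · J-entries = 1`, while on the other blocks it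
is arbitrary and gives `pfSum` of `K` restricted to `V = Wᶜ`. Each `V` arises from `C(T, |Vᶜ|)` sets
`U`, and the normalisations reduce the coefficient to `1 / (2^|V| |V|!)`.
-/

open Equiv Equiv.Perm Finset

variable {ι κ R : Type*}

section BlockPerm

theorem fst_apply_eq_fst_apply_zero {σ : Perm (ι × Fin 2)} {i : ι}
    (h : (σ (i, 0)).1 = (σ (i, 1)).1) (r : Fin 2) : (σ (i, r)).1 = (σ (i, 0)).1 := by
  fin_cases r
  exacts [rfl, h.symm]

theorem exists_apply_eq_mk {σ : Perm (ι × Fin 2)} {i : ι} (h : (σ (i, 0)).1 = (σ (i, 1)).1)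
    (c : Fin 2) : ∃ r, σ (i, r) = ((σ (i, 0)).1, c) := by
  have hne : (σ (i, 0)).2 ≠ (σ (i, 1)).2 := fun h2 =>
    absurd (σ.injective (Prod.ext h h2)) (by simp)
  obtain hc | hc : c = (σ (i, 0)).2 ∨ c = (σ (i, 1)).2 := by omega
  · exact ⟨0, by rw [hc]⟩
  · exact ⟨1, by rw [hc, h]⟩

theorem eq_of_fst_apply_eq {σ : Perm (ι × Fin 2)} {i j : ι} (hi : (σ (i, 0)).1 = (σ (i, 1)).1)
    (hij : (σ (i, 0)).1 = (σ (j, 0)).1) : i = j := by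
  obtain ⟨r, hr⟩ := exists_apply_eq_mk hi (σ (j, 0)).2
  rw [hij] at hr
  exact congrArg Prod.fst (σ.injective hr)

theorem exists_eq_prodCongr_mul_prodCongrRight [Finite κ] {σ : Perm (κ × Fin 2)}
    (h : ∀ k, (σ (k, 0)).1 = (σ (k, 1)).1) :
    ∃ (g : Perm κ) (e : κ → Perm (Fin 2)),
      σ = g.prodCongr (Equiv.refl _) * prodCongrRight e := by
  have hfst (k : κ) := fst_apply_eq_fst_apply_zero (h k)
  have hg : Function.Injective fun k => (σ (k, 0)).1 := fun k l hkl =>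
    eq_of_fst_apply_eq (h k) hkl
  have he (k : κ) : Function.Injective fun r => (σ (k, r)).2 := fun r s hrs =>
    congrArg Prod.snd (σ.injective (Prod.ext ((hfst k r).trans (hfst k s).symm) hrs))
  refine ⟨ofBijective _ (Finite.injective_iff_bijective.mp hg),
    fun k => ofBijective _ (Finite.injective_iff_bijective.mp (he k)), ?_⟩
  ext ⟨k, r⟩ <;> simp [hfst]

theorem sign_prodCongr_refl_fin_two [Fintype ι] [DecidableEq ι] (g : Perm ι) :
    sign (g.prodCongr (Equiv.refl (Fin 2))) = 1 := by
  have : g.prodCongr (Equiv.refl (Fin 2)) = prodCongrLeft fun _ => g := rfl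
  rw [this, sign_prodCongrLeft, Fin.prod_univ_two, Int.units_mul_self]

def blockImage [DecidableEq ι] (U : Finset ι) (σ : Perm (ι × Fin 2)) : Finset ι :=
  U.image fun i => (σ (i, 0)).1

theorem card_blockImage [DecidableEq ι] {U : Finset ι} {σ : Perm (ι × Fin 2)}
    (h : ∀ i ∈ U, (σ (i, 0)).1 = (σ (i, 1)).1) : (blockImage U σ).card = U.card :=
  card_image_of_injOn fun i hi _ _ hij => eq_of_fst_apply_eq (h i hi) hij

theorem blockImage_prodCongr_mul [DecidableEq ι] (U : Finset ι) (g : Perm ι)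
    (τ : Perm (ι × Fin 2)) :
    blockImage U (g.prodCongr (Equiv.refl _) * τ) = (blockImage U τ).image g := by
  simp [blockImage, image_image, Function.comp_def]

theorem fst_apply_mem_iff_of_blockImage_eq_self [DecidableEq ι] {U : Finset ι}
    {τ : Perm (ι × Fin 2)} (h : ∀ i ∈ U, (τ (i, 0)).1 = (τ (i, 1)).1)
    (himg : blockImage U τ = U) (x : ι × Fin 2) : (τ x).1 ∈ U ↔ x.1 ∈ U := by
  obtain ⟨i, r⟩ := x
  refine ⟨fun hx => ?_, fun hi => ?_⟩
  · rw [← himg] at hx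
    obtain ⟨j, hj, hji⟩ := mem_image.mp hx
    obtain ⟨r', hr'⟩ := exists_apply_eq_mk (h j hj) (τ (i, r)).2
    rw [hji] at hr'
    exact congrArg Prod.fst (τ.injective hr') ▸ hj
  · rw [fst_apply_eq_fst_apply_zero (h i hi), ← himg]
    exact mem_image_of_mem _ hi

theorem exists_perm_image_eq [Fintype ι] [DecidableEq ι] {U W : Finset ι}
    (h : U.card = W.card) : ∃ g : Perm ι, U.image g = W := by
  let e : {i // i ∈ U} ≃ {i // i ∈ W} := Fintype.equivOfCardEq (by simpa using h)
  refine ⟨e.extendSubtype, ext fun j => ⟨fun hj => ?_, fun hj => ?_⟩⟩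
  · obtain ⟨i, hi, rfl⟩ := mem_image.mp hj
    exact e.extendSubtype_mem i hi
  · by_contra hU
    have hi : e.extendSubtype.symm j ∉ U := fun hi => hU (mem_image.mpr ⟨_, hi, by simp⟩)
    exact e.extendSubtype_not_mem _ hi (by simpa using hj)

abbrev blockSubmatrix (M : Matrix (ι × Fin 2) (ι × Fin 2) R) (f : κ → ι) :
    Matrix (κ × Fin 2) (κ × Fin 2) R :=
  M.submatrix (Prod.map f id) (Prod.map f id)

end BlockPerm

section BlockJ

variable [DecidableEq ι] [CommRing R]

def blockJ : Matrix (ι × Fin 2) (ι × Fin 2) R :=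
  comp ι ι (Fin 2) (Fin 2) R (diagonal fun _ => !![0, 1; -1, 0])

theorem blockJ_apply (x y : ι × Fin 2) :
    (blockJ x y : R) = if x.1 = y.1 then !![(0 : R), 1; -1, 0] x.2 y.2 else 0 := by
  by_cases h : x.1 = y.1 <;> simp [blockJ, h]

theorem fst_eq_of_blockJ_ne_zero {x y : ι × Fin 2} (h : (blockJ x y : R) ≠ 0) : x.1 = y.1 := by
  by_contra hne
  exact h (by rw [blockJ_apply, if_neg hne])

theorem blockSubmatrix_blockJ [DecidableEq κ] {f : κ → ι} (hf : Function.Injective f) :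
    blockSubmatrix (blockJ : Matrix (ι × Fin 2) (ι × Fin 2) R) f = blockJ := by
  ext x y
  simp [blockJ_apply, hf.eq_iff]

theorem sign_mul_blockJ (v : ι) (e : Perm (Fin 2)) :
    ((sign e : ℤ) : R) * blockJ (v, e 0) (v, e 1) = 1 := by
  obtain rfl | rfl : e = 1 ∨ e = swap 0 1 := by revert e; decide
  all_goals simp [blockJ_apply]

end BlockJ

section PfSum

variable [Fintype ι] [DecidableEq ι] [Fintype κ] [DecidableEq κ] [CommRing R]

/-- For `ι = Fin n` and rows indexed by `(t, r) ↦ 2t + r`, this is `2^n n! · Pf`. -/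
def pfSum (M : Matrix (ι × Fin 2) (ι × Fin 2) R) : R :=
  ∑ σ : Perm (ι × Fin 2), ((sign σ : ℤ) : R) * ∏ i, M (σ (i, 0)) (σ (i, 1))

theorem pfSum_blockSubmatrix_equiv (M : Matrix (ι × Fin 2) (ι × Fin 2) R) (e : κ ≃ ι) :
    pfSum (blockSubmatrix M e) = pfSum M := by
  refine Fintype.sum_equiv (permCongr (e.prodCongr (Equiv.refl _))) _ _ fun σ => ?_
  rw [sign_permCongr]
  congr 1
  exact Fintype.prod_equiv e _ _ fun k => by simp [permCongr_apply]

theorem sum_perm_subtype_eq_pfSum (q : ι → Prop) [DecidablePred q] [Fintype {i // q i}]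
    (M : Matrix (ι × Fin 2) (ι × Fin 2) R) :
    ∑ τ : Perm {x : ι × Fin 2 // q x.1}, ((sign τ : ℤ) : R) *
        ∏ i : {i // q i}, M (τ ⟨(i, 0), i.2⟩) (τ ⟨(i, 1), i.2⟩) =
      pfSum (blockSubmatrix M (Subtype.val : {i // q i} → ι)) := by
  refine Fintype.sum_equiv (permCongr prodSubtypeFstEquivSubtypeProd) _ _ fun τ => ?_
  rw [sign_permCongr]
  rfl

theorem pfSum_blockJ :
    pfSum (blockJ : Matrix (κ × Fin 2) (κ × Fin 2) R) =
      (Fintype.card κ).factorial * 2 ^ Fintype.card κ := by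
  have hcount : (∑ _p : Perm κ × (κ → Perm (Fin 2)), (1 : R)) =
      pfSum (blockJ : Matrix (κ × Fin 2) (κ × Fin 2) R) := by
    refine Fintype.sum_of_injective
      (fun p => p.1.prodCongr (Equiv.refl _) * prodCongrRight p.2) ?_ _ _ ?_ ?_
    · rintro ⟨g, e⟩ ⟨g', e'⟩ hge
      have hpt (k : κ) (r : Fin 2) : (g k, e k r) = (g' k, e' k r) :=
        congrFun (congrArg DFunLike.coe hge) (k, r)
      simp only [Prod.mk.injEq]
      exact ⟨Equiv.ext fun k => congrArg Prod.fst (hpt k 0),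
        funext fun k => Equiv.ext fun r => congrArg Prod.snd (hpt k r)⟩
    · intro σ hσ
      by_contra hne
      obtain ⟨g, e, rfl⟩ := exists_eq_prodCongr_mul_prodCongrRight fun k =>
        fst_eq_of_blockJ_ne_zero (R := R) fun h0 =>
          hne (by rw [prod_eq_zero (mem_univ k) h0, mul_zero])
      exact hσ ⟨(g, e), rfl⟩
    · rintro ⟨g, e⟩
      simp only [map_mul, sign_prodCongr_refl_fin_two, sign_prodCongrRight, one_mul,
        Units.coe_prod, Int.cast_prod, ← prod_mul_distrib]
      exact (prod_eq_one fun k _ => sign_mul_blockJ (g k) (e k)).symm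
  simp [← hcount, Fintype.card_perm]

def pfSplitTerm (U : Finset ι) (N M : Matrix (ι × Fin 2) (ι × Fin 2) R)
    (σ : Perm (ι × Fin 2)) : R :=
  ((sign σ : ℤ) : R) * ((∏ i ∈ U, N (σ (i, 0)) (σ (i, 1))) * ∏ i ∈ Uᶜ, M (σ (i, 0)) (σ (i, 1)))

theorem pfSum_add (N M : Matrix (ι × Fin 2) (ι × Fin 2) R) :
    pfSum (N + M) = ∑ U : Finset ι, ∑ σ, pfSplitTerm U N M σ := by
  simp only [pfSum, pfSplitTerm, Matrix.add_apply, Fintype.prod_add, mul_sum]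
  exact sum_comm

theorem fst_apply_eq_of_pfSplitTerm_ne_zero {U : Finset ι}
    {M : Matrix (ι × Fin 2) (ι × Fin 2) R} {σ : Perm (ι × Fin 2)}
    (h : pfSplitTerm U blockJ M σ ≠ 0) {i : ι} (hi : i ∈ U) : (σ (i, 0)).1 = (σ (i, 1)).1 :=
  fst_eq_of_blockJ_ne_zero fun h0 => h (by rw [pfSplitTerm, prod_eq_zero hi h0, zero_mul, mul_zero])

theorem pfSplitTerm_prodCongr_mul (U : Finset ι) (M : Matrix (ι × Fin 2) (ι × Fin 2) R)
    (g : Perm ι) (τ : Perm (ι × Fin 2)) :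
    pfSplitTerm U blockJ M (g.prodCongr (Equiv.refl _) * τ) =
      pfSplitTerm U blockJ (blockSubmatrix M g) τ := by
  have hJ : blockSubmatrix (blockJ : Matrix (ι × Fin 2) (ι × Fin 2) R) g = blockJ :=
    blockSubmatrix_blockJ g.injective
  rw [pfSplitTerm, pfSplitTerm, map_mul, sign_prodCongr_refl_fin_two, one_mul]
  congr 2
  exact prod_congr rfl fun i _ => congrFun₂ hJ (τ (i, 0)) (τ (i, 1))

theorem pfSplitTerm_subtypeCongr (U : Finset ι) (N M : Matrix (ι × Fin 2) (ι × Fin 2) R)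
    (τ₁ : Perm {x : ι × Fin 2 // x.1 ∈ U}) (τ₂ : Perm {x : ι × Fin 2 // x.1 ∉ U}) :
    pfSplitTerm U N M (τ₁.subtypeCongr τ₂) =
      (((sign τ₁ : ℤ) : R) * ∏ i : {i // i ∈ U}, N (τ₁ ⟨(i, 0), i.2⟩) (τ₁ ⟨(i, 1), i.2⟩)) *
        (((sign τ₂ : ℤ) : R) * ∏ i : {i // i ∉ U}, M (τ₂ ⟨(i, 0), i.2⟩) (τ₂ ⟨(i, 1), i.2⟩)) := by
  rw [pfSplitTerm, sign_subtypeCongr, Units.val_mul, Int.cast_mul,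
    prod_subtype U (fun _ => Iff.rfl), prod_subtype Uᶜ (fun _ => mem_compl), mul_mul_mul_comm]
  congr 2 <;> refine Fintype.prod_congr _ _ fun i => ?_ <;> simp [i.2]

theorem sum_filter_blockImage_eq_self_pfSplitTerm (U : Finset ι)
    (M : Matrix (ι × Fin 2) (ι × Fin 2) R) :
    ∑ τ with blockImage U τ = U, pfSplitTerm U blockJ M τ =
      (U.card.factorial * 2 ^ U.card) *
        pfSum (blockSubmatrix M (Subtype.val : {i // i ∉ U} → ι)) := by
  have hsplit : ∑ τ₁₂ : Perm {x : ι × Fin 2 // x.1 ∈ U} × Perm {x : ι × Fin 2 // x.1 ∉ U},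
      pfSplitTerm U blockJ M (τ₁₂.1.subtypeCongr τ₁₂.2) =
        ∑ τ with blockImage U τ = U, pfSplitTerm U blockJ M τ := by
    refine sum_bij_ne_zero (fun τ₁₂ _ _ => τ₁₂.1.subtypeCongr τ₁₂.2) ?_ ?_ ?_ fun _ _ _ => rfl
    · rintro ⟨τ₁, τ₂⟩ - hne
      refine mem_filter.mpr ⟨mem_univ _, eq_of_subset_of_card_le (fun v hv => ?_)
        (card_blockImage fun i hi => fst_apply_eq_of_pfSplitTerm_ne_zero hne hi).ge⟩
      obtain ⟨i, hi, rfl⟩ := mem_image.mp hv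
      simpa [hi] using (τ₁ ⟨(i, 0), hi⟩).2
    · rintro ⟨τ₁, τ₂⟩ - - ⟨τ₁', τ₂'⟩ - - h
      exact subtypeCongrHom_injective _ h
    · intro τ hτ hne
      have hp := fst_apply_mem_iff_of_blockImage_eq_self
        (fun i hi => fst_apply_eq_of_pfSplitTerm_ne_zero hne hi) (mem_filter.mp hτ).2
      let τ₁ := τ.subtypePerm (p := fun x => x.1 ∈ U) hp
      let τ₂ := τ.subtypePerm (p := fun x => x.1 ∉ U) fun x => not_congr (hp x)
      have hτ' : τ₁.subtypeCongr τ₂ = τ := by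
        refine Equiv.ext fun x => ?_
        by_cases hx : x.1 ∈ U <;> simp [τ₁, τ₂, hx]
      exact ⟨(τ₁, τ₂), mem_univ _, by rwa [hτ'], hτ'⟩
  rw [← hsplit, Fintype.sum_prod_type]
  simp_rw [pfSplitTerm_subtypeCongr]
  rw [← sum_mul_sum]
  refine (congrArg₂ (· * ·) (sum_perm_subtype_eq_pfSum (· ∈ U) blockJ)
    (sum_perm_subtype_eq_pfSum (· ∉ U) M)).trans ?_
  rw [blockSubmatrix_blockJ Subtype.val_injective, pfSum_blockJ, Fintype.card_coe]

theorem sum_pfSplitTerm_blockJ (U : Finset ι) (M : Matrix (ι × Fin 2) (ι × Fin 2) R) :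
    ∑ σ, pfSplitTerm U blockJ M σ = (U.card.factorial * 2 ^ U.card) *
      ∑ W ∈ powersetCard U.card univ,
        pfSum (blockSubmatrix M (Subtype.val : {i // i ∉ W} → ι)) := by
  rw [← sum_fiberwise univ (blockImage U), mul_sum, ← sum_subset (subset_univ _)]
  · refine sum_congr rfl fun W hW => ?_
    obtain ⟨g, hg⟩ := exists_perm_image_eq (mem_powersetCard.mp hW).2.symm
    have hgW (i : ι) : i ∉ U ↔ g i ∉ W := by
      rw [← hg, g.injective.mem_finset_image]
    calc ∑ σ with blockImage U σ = W, pfSplitTerm U blockJ M σ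
        = ∑ τ with blockImage U τ = U, pfSplitTerm U blockJ (blockSubmatrix M g) τ := by
          refine (sum_equiv (Equiv.mulLeft (g.prodCongr (Equiv.refl _))) (fun τ => ?_)
            fun τ _ => (pfSplitTerm_prodCongr_mul U M g τ).symm).symm
          simp [blockImage_prodCongr_mul, ← hg, (image_injective g.injective).eq_iff]
      _ = _ := sum_filter_blockImage_eq_self_pfSplitTerm U _
      _ = _ := by
          rw [← pfSum_blockSubmatrix_equiv (blockSubmatrix M (Subtype.val : {i // i ∉ W} → ι))
            (g.subtypeEquiv hgW)]
          rfl
  · intro W _ hW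
    refine sum_eq_zero fun σ hσ => by_contra fun hne =>
      hW (mem_powersetCard.mpr ⟨subset_univ _, ?_⟩)
    rw [← (mem_filter.mp hσ).2,
      card_blockImage fun i hi => fst_apply_eq_of_pfSplitTerm_ne_zero hne hi]

theorem pfSum_blockJ_add (M : Matrix (ι × Fin 2) (ι × Fin 2) R) :
    pfSum (blockJ + M) = ∑ V : Finset ι,
      ((Fintype.card ι).choose Vᶜ.card * Vᶜ.card.factorial * 2 ^ Vᶜ.card) *
        pfSum (blockSubmatrix M (Subtype.val : V → ι)) := by
  rw [pfSum_add]
  simp_rw [sum_pfSplitTerm_blockJ, mul_sum]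
  rw [sum_comm' (t' := univ) (s' := fun W => powersetCard W.card univ) (by simp [eq_comm])]
  refine Fintype.sum_equiv (compl_involutive.toPerm _) _ _ fun W => ?_
  rw [sum_congr rfl fun U hU => by rw [(mem_powersetCard.mp hU).2], sum_const, card_powersetCard,
    card_univ, nsmul_eq_mul, Function.Involutive.coe_toPerm, compl_compl, ← mul_assoc]
  congr 1
  · ring
  · exact pfSum_blockSubmatrix_equiv (blockSubmatrix M (Subtype.val : ↥Wᶜ → ι))
      (subtypeEquivRight fun _ => mem_compl.symm)

end PfSum

theorem sum_strictMono_pfSum {ι R : Type*} [Fintype ι] [LinearOrder ι] [CommRing R]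
    (M : Matrix (ι × Fin 2) (ι × Fin 2) R) (S : ℕ) :
    ∑ 𝔱 : {f : Fin S → ι // StrictMono f}, pfSum (blockSubmatrix M 𝔱.1) =
      ∑ V ∈ powersetCard S univ, pfSum (blockSubmatrix M (Subtype.val : V → ι)) := by
  refine (sum_bij'
    (fun V hV => ⟨V.orderEmbOfFin (mem_powersetCard.mp hV).2, OrderEmbedding.strictMono _⟩)
    (fun 𝔱 _ => univ.image 𝔱.1) (fun _ _ => mem_univ _) (fun 𝔱 _ => ?_) (fun V hV => ?_)
    (fun 𝔱 _ => ?_) (fun V hV => ?_)).symm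
  · simp [mem_powersetCard, card_image_of_injective _ 𝔱.2.injective]
  · simp
  · exact Subtype.ext (orderEmbOfFin_unique _ (fun x => mem_image_of_mem _ (mem_univ x)) 𝔱.2).symm
  · exact (pfSum_blockSubmatrix_equiv _ (V.orderIsoOfFin (mem_powersetCard.mp hV).2).toEquiv).symm

theorem Pf_blockMat {T : ℕ} (K : Fin T → Fin T → Matrix (Fin 2) (Fin 2) ℝ) :
    Pf (blockMat K) = (2 ^ T * T.factorial : ℝ)⁻¹ * pfSum (comp _ _ _ _ ℝ (of K)) := by
  let e : Fin (2 * T) ≃ Fin T × Fin 2 := (finCongr (Nat.mul_comm 2 T)).trans finProdFinEquiv.symm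
  have he (i : Fin T) (r : Fin 2) : e.symm (i, r) = ⟨2 * i + r, by omega⟩ := by
    ext
    simp [e]
    ring
  rw [Pf, one_div]
  congr 1
  refine Fintype.sum_equiv (permCongr e) _ _ fun σ => ?_
  rw [sign_permCongr]
  congr 1
  refine Fintype.prod_congr _ _ fun i => ?_
  simp only [permCongr_apply, he]
  rfl

theorem Pf_Jmat_add_blockMat {T : ℕ} (K : Fin T → Fin T → Matrix (Fin 2) (Fin 2) ℝ) :
    Pf (Jmat T + blockMat K) =
      (2 ^ T * T.factorial : ℝ)⁻¹ * pfSum (blockJ + comp _ _ _ _ ℝ (of K)) := by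
  rw [show Jmat T + blockMat K = blockMat (diagonal (fun _ => !![0, 1; -1, 0]) + of K) from rfl,
    Pf_blockMat]
  rfl

theorem sum_Pf_blockMat_strictMono {T : ℕ} (K : Fin T → Fin T → Matrix (Fin 2) (Fin 2) ℝ)
    (S : ℕ) :
    ∑ 𝔱 : {f : Fin S → Fin T // StrictMono f}, Pf (blockMat (fun s s' => K (𝔱.1 s) (𝔱.1 s'))) =
      (2 ^ S * S.factorial : ℝ)⁻¹ * ∑ V ∈ powersetCard S univ,
        pfSum (blockSubmatrix (comp _ _ _ _ ℝ (of K)) (Subtype.val : V → Fin T)) := by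
  simp_rw [Pf_blockMat, ← mul_sum]
  refine congrArg _ ((sum_congr rfl fun 𝔱 _ => ?_).trans (sum_strictMono_pfSum _ S))
  congr 1

theorem inv_two_pow_mul_factorial_mul_choose {S T : ℕ} (h : S ≤ T) :
    (2 ^ T * T.factorial : ℝ)⁻¹ * (T.choose S * (T - S).factorial * 2 ^ (T - S)) =
      ((2 : ℝ) ^ S * S.factorial)⁻¹ := by
  have hC : (T.choose S : ℝ) ≠ 0 := Nat.cast_ne_zero.mpr (Nat.choose_pos h).ne'
  have hfact : (T.choose S * S.factorial * (T - S).factorial : ℝ) = T.factorial := by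
    exact_mod_cast Nat.choose_mul_factorial_mul_factorial h
  have hpow : (2 : ℝ) ^ T = 2 ^ S * 2 ^ (T - S) := by rw [← pow_add, Nat.add_sub_cancel' h]
  rw [← hfact, hpow]
  field_simp

open Classical in
theorem pf_J_add_block {T : ℕ} (K : Fin T → Fin T → Matrix (Fin 2) (Fin 2) ℝ) :
    Pf (Jmat T + blockMat K)
      = 1 + ∑ S ∈ Finset.Icc 1 T, ∑ 𝔱 : {f : Fin S → Fin T // StrictMono f},
          Pf (blockMat (fun s s' => K (𝔱.1 s) (𝔱.1 s'))) := by
  calc Pf (Jmat T + blockMat K)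
      = ∑ S ∈ range (T + 1), ∑ 𝔱 : {f : Fin S → Fin T // StrictMono f},
          Pf (blockMat (fun s s' => K (𝔱.1 s) (𝔱.1 s'))) := by
        rw [Pf_Jmat_add_blockMat, pfSum_blockJ_add, ← powerset_univ, sum_powerset, card_univ,
          Fintype.card_fin, mul_sum]
        refine sum_congr rfl fun S hS => ?_
        rw [sum_Pf_blockMat_strictMono, mul_sum, mul_sum]
        refine sum_congr rfl fun V hV => ?_
        have hST : S ≤ T := Nat.lt_succ_iff.mp (mem_range.mp hS)
        rw [card_compl, Fintype.card_fin, (mem_powersetCard.mp hV).2, Nat.choose_symm hST,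
          ← mul_assoc, inv_two_pow_mul_factorial_mul_choose hST]
    _ = _ := by
        rw [range_eq_Ico, sum_eq_sum_Ico_succ_bot (by omega : 0 < T + 1), zero_add,
          Ico_add_one_right_eq_Icc]
        simp [Pf, Subsingleton.strictMono]
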